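/- Let G consist of an n-cycle v_1,...,v_n plus two vertices v and w each adjacent to all v_i (with v, w nonadjacent). If v_i and v_j are cycle vertices whose distance on the cycle C_n exceeds 3, then d_G(v_i, v_j) = 2 and the only geodesics between v_i and v_j in G are the paths v_i, v, v_j and v_i, w, v_j. -/

import Mathlib

/-!
Two cycle vertices at cycle distance more than two are neither adjacent nor share a neighbour
on the cycle, so in `H_n` they are non-adjacent and their common neighbours are exactly `v`
and `w`. Hence their distance is two, and a walk of length two, being determined by its middle
vertex, passes through `v` or `w`.
-/

namespace RC

variable {V : Type*}

/-- A walk is rainbow under edge coloring `c` if its edges receive pairwise distinct colors. -/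
def IsRainbow {G : SimpleGraph V} (c : Sym2 V → ℕ) {u v : V} (p : G.Walk u v) : Prop :=
  (p.edges.map c).Nodup

/-- `c` is a rainbow coloring: every pair of vertices is joined by a rainbow path. -/
def IsRainbowColoring (G : SimpleGraph V) (c : Sym2 V → ℕ) : Prop :=
  ∀ u v : V, ∃ p : G.Walk u v, p.IsPath ∧ IsRainbow c p

/-- `c` is a strong rainbow coloring: every pair of vertices is joined by a rainbow geodesic. -/
def IsStrongRainbowColoring (G : SimpleGraph V) (c : Sym2 V → ℕ) : Prop :=
  ∀ u v : V, ∃ p : G.Walk u v, p.IsPath ∧ p.length = G.dist u v ∧ IsRainbow c p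

/-- `c` uses at most `k` colors (namely `0, …, k-1`) on the edges of `G`. -/
def UsesColors (G : SimpleGraph V) (c : Sym2 V → ℕ) (k : ℕ) : Prop :=
  ∀ e ∈ G.edgeSet, c e < k

/-- The rainbow connection number `rc(G)`. -/
noncomputable def rc (G : SimpleGraph V) : ℕ :=
  sInf {k | ∃ c : Sym2 V → ℕ, UsesColors G c k ∧ IsRainbowColoring G c}

/-- The strong rainbow connection number `src(G)`. -/
noncomputable def src (G : SimpleGraph V) : ℕ :=
  sInf {k | ∃ c : Sym2 V → ℕ, UsesColors G c k ∧ IsStrongRainbowColoring G c}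

/-- Vertices of `H_n`: cycle vertices plus `v` (`true`) and `w` (`false`). -/
abbrev HV (n : ℕ) := Fin n ⊕ Bool

def hRel (n : ℕ) : HV n → HV n → Prop := fun x y =>
  match x, y with
  | Sum.inl i, Sum.inl j => (i.val + 1) % n = j.val
  | Sum.inl _, Sum.inr _ => True
  | _, _ => False

/-- The graph `H_n`: an `n`-cycle plus two vertices `v, w` each adjacent to all cycle
vertices (and not to each other). -/
def HG (n : ℕ) : SimpleGraph (HV n) := SimpleGraph.fromRel (hRel n)

end RC

namespace SimpleGraph

variable {V : Type*} {G : SimpleGraph V} {u v : V}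

lemma lt_edist_of_lt_dist {k : ℕ} (h : k < G.dist u v) : (k : ℕ∞) < G.edist u v :=
  (Nat.cast_lt.mpr h).trans_le (ENat.natCast_toNat_le_self _)

lemma dist_eq_two_iff :
    G.dist u v = 2 ↔ u ≠ v ∧ ¬G.Adj u v ∧ (G.commonNeighbors u v).Nonempty := by
  rw [dist, ENat.toNat_eq_iff two_ne_zero, ← edist_eq_two_iff]
  rfl

lemma Walk.exists_support_eq_of_length_eq_two {p : G.Walk u v} (hp : p.length = 2) :
    ∃ x ∈ G.commonNeighbors u v, p.support = [u, x, v] := by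
  match p, hp with
  | .cons hux (.cons hxv .nil), _ => exact ⟨_, ⟨hux, hxv.symm⟩, rfl⟩

lemma cycleGraph_adj_of_val_add_one_mod {n : ℕ} {a b : Fin n} (hab : a ≠ b)
    (h : (a.val + 1) % n = b.val) : (cycleGraph n).Adj a b := by
  match n, a, b with
  | 1, a, b => exact absurd (Subsingleton.elim a b) hab
  | m + 2, a, b =>
    have hb : b = a + 1 := Fin.ext (by rw [Fin.val_add, Fin.val_one]; exact h.symm)
    exact cycleGraph_adj.mpr (Or.inr (by rw [hb, add_sub_cancel_left]))

end SimpleGraph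

namespace RC

open SimpleGraph

lemma HG.adj_inl_inr {n : ℕ} (k : Fin n) (b : Bool) : (HG n).Adj (Sum.inl k) (Sum.inr b) :=
  (fromRel_adj _ _ _).mpr ⟨Sum.inl_ne_inr, Or.inl trivial⟩

lemma HG.cycleGraph_adj_of_adj {n : ℕ} {a b : Fin n} (h : (HG n).Adj (Sum.inl a) (Sum.inl b)) :
    (cycleGraph n).Adj a b := by
  have hab : a ≠ b := fun e => h.ne (congrArg Sum.inl e)
  obtain ⟨-, h | h⟩ := (fromRel_adj _ _ _).mp h
  · exact cycleGraph_adj_of_val_add_one_mod hab h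
  · exact (cycleGraph_adj_of_val_add_one_mod hab.symm h).symm

lemma HG.exists_eq_inr_of_mem_commonNeighbors {n : ℕ} {i j : Fin n}
    (hij : (cycleGraph n).commonNeighbors i j = ∅) {x : HV n}
    (hx : x ∈ (HG n).commonNeighbors (Sum.inl i) (Sum.inl j)) : ∃ b, x = Sum.inr b := by
  rcases x with k | b
  · have hk : k ∈ (cycleGraph n).commonNeighbors i j :=
      ⟨cycleGraph_adj_of_adj hx.1, cycleGraph_adj_of_adj hx.2⟩
    simp [hij] at hk
  · exact ⟨b, rfl⟩

/-- In `H_n`, if two cycle vertices are at distance more than `3` along the cycle, then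
their distance in `H_n` is `2` and the only geodesics between them are the paths
through `v` and through `w`. -/
theorem stmt_13 (n : ℕ) (i j : Fin n)
    (hfar : 3 < (SimpleGraph.cycleGraph n).dist i j) :
    (HG n).dist (Sum.inl i) (Sum.inl j) = 2 ∧
      ∀ p : (HG n).Walk (Sum.inl i) (Sum.inl j), p.IsPath → p.length = 2 →
        p.support = [Sum.inl i, Sum.inr true, Sum.inl j] ∨
        p.support = [Sum.inl i, Sum.inr false, Sum.inl j] := by
  obtain ⟨hne, hnadj, hnocommon⟩ :=
    two_lt_edist_iff.mp (lt_edist_of_lt_dist (k := 2) ((by norm_num : 2 < 3).trans hfar))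
  refine ⟨dist_eq_two_iff.mpr ⟨?_, ?_, ?_⟩, fun p _ hp => ?_⟩
  · exact fun e => hne (Sum.inl_injective e)
  · exact fun h => hnadj (HG.cycleGraph_adj_of_adj h)
  · exact ⟨Sum.inr true, HG.adj_inl_inr i true, HG.adj_inl_inr j true⟩
  · obtain ⟨x, hx, hsupp⟩ := p.exists_support_eq_of_length_eq_two hp
    obtain ⟨b, rfl⟩ := HG.exists_eq_inr_of_mem_commonNeighbors hnocommon hx
    cases b <;> simp [hsupp]

end RC
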